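/- Let U be a 2^N × 2^N unitary matrix, let ρ = |0⟩⟨0| ⊗ (2^{−N} • I_{2^N}), let H₁ be the 2×2 Hadamard matrix, and let CU = |0⟩⟨0| ⊗ I_{2^N} + |1⟩⟨1| ⊗ U. Let σ = CU · (H₁ ⊗ I_{2^N}) · ρ · (H₁ ⊗ I_{2^N})† · CU†. Then tr( (Y ⊗ I_{2^N}) · σ ) = Im(tr U) / 2^N, where Y = [[0, −i], [i, 0]] is the single-qubit Pauli Y matrix. -/

import Mathlib

/-!
The Hadamard gate turns `|0⟩⟨0|` into `|+⟩⟨+| = ½ [[1,1],[1,1]]`, and controlled-`U` acts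
blockwise, so `σ = Σ_{a,b} |a⟩⟨a| |+⟩⟨+| |b⟩⟨b| ⊗ 2^{-N} U_a U_bᴴ` with `U₀ = 1`, `U₁ = U`.
Pauli `Y` only sees the off-diagonal blocks, whose `Y`-weights are `±i/2`; they contribute
`(i/2) 2^{-N} (tr Uᴴ - tr U) = 2^{-N} Im (tr U)`.
-/

noncomputable section

open Matrix
open scoped Kronecker

def PauliY : Matrix (Fin 2) (Fin 2) ℂ := !![0, -Complex.I; Complex.I, 0]

def proj0 : Matrix (Fin 2) (Fin 2) ℂ := !![1, 0; 0, 0]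

def proj1 : Matrix (Fin 2) (Fin 2) ℂ := !![0, 0; 0, 1]

def Hadamard : Matrix (Fin 2) (Fin 2) ℂ :=
  (((Real.sqrt 2)⁻¹ : ℝ) : ℂ) • !![1, 1; 1, -1]

section Kronecker

variable {m n R : Type*} [Fintype m] [Fintype n] [CommSemiring R] [StarRing R]

theorem trace_one_kronecker_mul_kronecker_mul_kronecker_mul_conjTranspose [DecidableEq n]
    (Q P M P' : Matrix m m R) (A X B : Matrix n n R) :
    trace ((Q ⊗ₖ 1) * (P ⊗ₖ A) * (M ⊗ₖ X) * (P' ⊗ₖ B)ᴴ) =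
      trace (Q * P * M * P'ᴴ) * trace (A * X * Bᴴ) := by
  rw [conjTranspose_kronecker, ← mul_kronecker_mul, ← mul_kronecker_mul, ← mul_kronecker_mul,
    trace_kronecker, Matrix.one_mul]

theorem trace_one_kronecker_mul_controlled_conj [DecidableEq n]
    (Q P₀ P₁ M : Matrix m m R) (A B X : Matrix n n R) :
    trace ((Q ⊗ₖ 1) * (P₀ ⊗ₖ A + P₁ ⊗ₖ B) * (M ⊗ₖ X) * (P₀ ⊗ₖ A + P₁ ⊗ₖ B)ᴴ) =
      trace (Q * P₀ * M * P₀ᴴ) * trace (A * X * Aᴴ) +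
      trace (Q * P₀ * M * P₁ᴴ) * trace (A * X * Bᴴ) +
      trace (Q * P₁ * M * P₀ᴴ) * trace (B * X * Aᴴ) +
      trace (Q * P₁ * M * P₁ᴴ) * trace (B * X * Bᴴ) := by
  simp only [conjTranspose_add, Matrix.mul_add, Matrix.add_mul, trace_add,
    trace_one_kronecker_mul_kronecker_mul_kronecker_mul_conjTranspose]
  ring

end Kronecker

theorem Hadamard_conjTranspose : Hadamardᴴ = Hadamard := by
  ext i j
  fin_cases i <;> fin_cases j <;> simp [Hadamard, conjTranspose_apply]

theorem proj0_conjTranspose : proj0ᴴ = proj0 := by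
  ext i j
  fin_cases i <;> fin_cases j <;> simp [proj0, conjTranspose_apply]

theorem proj1_conjTranspose : proj1ᴴ = proj1 := by
  ext i j
  fin_cases i <;> fin_cases j <;> simp [proj1, conjTranspose_apply]

def projPlus : Matrix (Fin 2) (Fin 2) ℂ := (2⁻¹ : ℂ) • !![1, 1; 1, 1]

theorem Hadamard_mul_proj0_mul_Hadamard : Hadamard * proj0 * Hadamard = projPlus := by
  have hsqrt : ((Real.sqrt 2 : ℝ) : ℂ)⁻¹ * ((Real.sqrt 2 : ℝ) : ℂ)⁻¹ = 2⁻¹ := by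
    rw [← mul_inv, ← Complex.ofReal_mul, Real.mul_self_sqrt zero_le_two, Complex.ofReal_ofNat]
  ext i j
  fin_cases i <;> fin_cases j <;> simp [Hadamard, proj0, projPlus, hsqrt]

theorem trace_PauliY_mul_proj0_mul_projPlus_mul_proj0 :
    trace (PauliY * proj0 * projPlus * proj0) = 0 := by
  simp [PauliY, proj0, projPlus, trace_fin_two]

theorem trace_PauliY_mul_proj0_mul_projPlus_mul_proj1 :
    trace (PauliY * proj0 * projPlus * proj1) = Complex.I / 2 := by
  simp [PauliY, proj0, proj1, projPlus, trace_fin_two, div_eq_mul_inv]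

theorem trace_PauliY_mul_proj1_mul_projPlus_mul_proj0 :
    trace (PauliY * proj1 * projPlus * proj0) = -Complex.I / 2 := by
  simp [PauliY, proj0, proj1, projPlus, trace_fin_two, div_eq_mul_inv]

theorem trace_PauliY_mul_proj1_mul_projPlus_mul_proj1 :
    trace (PauliY * proj1 * projPlus * proj1) = 0 := by
  simp [PauliY, proj1, projPlus, trace_fin_two]

theorem dqc1_trace_estimation_imaginary_part_general (N : ℕ)
    (U : Matrix (Fin N → Fin 2) (Fin N → Fin 2) ℂ) :
    let I2N : Matrix (Fin N → Fin 2) (Fin N → Fin 2) ℂ := 1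
    let ρ := proj0 ⊗ₖ (((2 : ℂ) ^ N)⁻¹ • I2N)
    let CU := proj0 ⊗ₖ I2N + proj1 ⊗ₖ U
    let σ := CU * (Hadamard ⊗ₖ I2N) * ρ * (Hadamard ⊗ₖ I2N)ᴴ * CUᴴ
    Matrix.trace ((PauliY ⊗ₖ I2N) * σ) = (((Matrix.trace U).im / 2 ^ N : ℝ) : ℂ) := by
  intro I2N ρ CU σ
  have hρ : (Hadamard ⊗ₖ I2N) * ρ * (Hadamard ⊗ₖ I2N)ᴴ =
      (Hadamard * proj0 * Hadamard) ⊗ₖ (((2 : ℂ) ^ N)⁻¹ • I2N) := by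
    simp only [ρ, I2N, conjTranspose_kronecker, Hadamard_conjTranspose, conjTranspose_one,
      ← mul_kronecker_mul, Matrix.one_mul, Matrix.mul_one]
  have hσ : σ = CU * ((Hadamard * proj0 * Hadamard) ⊗ₖ (((2 : ℂ) ^ N)⁻¹ • I2N)) * CUᴴ := by
    rw [← hρ]
    simp only [σ, Matrix.mul_assoc]
  simp only [hσ, CU, I2N, ← Matrix.mul_assoc]
  rw [trace_one_kronecker_mul_controlled_conj, proj0_conjTranspose,
    proj1_conjTranspose, Hadamard_mul_proj0_mul_Hadamard,
    trace_PauliY_mul_proj0_mul_projPlus_mul_proj0, trace_PauliY_mul_proj0_mul_projPlus_mul_proj1,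
    trace_PauliY_mul_proj1_mul_projPlus_mul_proj0, trace_PauliY_mul_proj1_mul_projPlus_mul_proj1]
  simp only [zero_mul, add_zero, zero_add, conjTranspose_one, Matrix.one_mul, Matrix.mul_one,
    Matrix.mul_smul, Matrix.smul_mul, trace_smul, trace_conjTranspose, smul_eq_mul]
  have hIm := Complex.sub_conj (trace U)
  push_cast at hIm ⊢
  rw [Complex.star_def]
  linear_combination (-(Complex.I * ((2 : ℂ) ^ N)⁻¹ / 2)) * hIm -
    ((trace U).im / (2 : ℂ) ^ N) * Complex.I_mul_I

theorem dqc1_trace_estimation_imaginary_part (N : ℕ)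
    (U : Matrix (Fin N → Fin 2) (Fin N → Fin 2) ℂ)
    (hU : U ∈ Matrix.unitaryGroup (Fin N → Fin 2) ℂ) :
    let I2N : Matrix (Fin N → Fin 2) (Fin N → Fin 2) ℂ := 1
    let ρ := proj0 ⊗ₖ (((2 : ℂ) ^ N)⁻¹ • I2N)
    let CU := proj0 ⊗ₖ I2N + proj1 ⊗ₖ U
    let σ := CU * (Hadamard ⊗ₖ I2N) * ρ * (Hadamard ⊗ₖ I2N)ᴴ * CUᴴ
    Matrix.trace ((PauliY ⊗ₖ I2N) * σ) = (((Matrix.trace U).im / 2 ^ N : ℝ) : ℂ) :=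
  dqc1_trace_estimation_imaginary_part_general N U
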